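/- Let T be a finite tree of diameter d and let P = v₀v₁⋯v_d be a diametrical path of T containing all central vertices of T. Then the Fermat eccentricity is symmetric along P: for all i = 0, 1, …, d, ε₃(v_i; T) = ε₃(v_{d−i}; T). -/

import Mathlib

open SimpleGraph Finset

variable {V : Type*}

/-- The Fermat distance of a vertex triple: minimum over all vertices σ of
    `d(σ,u) + d(σ,v) + d(σ,w)`. -/
noncomputable def fermatDist (G : SimpleGraph V) (u v w : V) : ℕ :=
  ⨅ σ : V, (G.dist σ u + G.dist σ v + G.dist σ w)

/-- The Fermat eccentricity `ε₃(u;G)`: maximum Fermat distance of triples containing `u`. -/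
noncomputable def fermatEcc [Fintype V] (G : SimpleGraph V) (u : V) : ℕ :=
  Finset.univ.sup fun p : V × V => fermatDist G u p.1 p.2

/-- The ordinary eccentricity `ε₂(u;G)`. -/
noncomputable def ecc2 [Fintype V] (G : SimpleGraph V) (u : V) : ℕ :=
  Finset.univ.sup fun v => G.dist u v

/-- The diameter of `G`. -/
noncomputable def gdiam [Fintype V] (G : SimpleGraph V) : ℕ :=
  Finset.univ.sup fun p : V × V => G.dist p.1 p.2

/-- A central vertex: one minimizing the ordinary eccentricity. -/
def isCentral [Fintype V] (G : SimpleGraph V) (c : V) : Prop :=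
  ∀ u : V, ecc2 G c ≤ ecc2 G u

/-- The number of edges of `G`. -/
noncomputable def numEdges [Fintype V] (G : SimpleGraph V) : ℕ :=
  letI := Classical.decEq V
  letI := Classical.decRel G.Adj
  G.edgeFinset.card

/-- The first Zagreb–Fermat eccentricity index `F₁(G) = Σ_u ε₃(u)²`. -/
noncomputable def F1 [Fintype V] (G : SimpleGraph V) : ℕ :=
  ∑ u : V, (fermatEcc G u) ^ 2

/-- The second Zagreb–Fermat eccentricity index `F₂(G) = Σ_{uv ∈ E} ε₃(u)·ε₃(v)`. -/
noncomputable def F2 [Fintype V] (G : SimpleGraph V) : ℕ :=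
  letI := Classical.decEq V
  letI := Classical.decRel G.Adj
  ∑ e ∈ G.edgeFinset,
    Sym2.lift ⟨fun u v => fermatEcc G u * fermatEcc G v, fun _ _ => mul_comm _ _⟩ e

/-- `u` lies in the subtree `T_{v_i}` hanging off the `i`-th vertex of the path `P`:
its geodesic to every vertex of `P` passes through `P.getVert i`. -/
def inSubtree (G : SimpleGraph V) {a b : V} (P : G.Walk a b) (i : ℕ) (u : V) : Prop :=
  ∀ j ≤ P.length, G.dist u (P.getVert j) = G.dist u (P.getVert i) + G.dist (P.getVert i) (P.getVert j)

/-- `ℓ_i`: the height of the subtree `T_{v_i}`. -/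
noncomputable def subtreeHeight [Fintype V] (G : SimpleGraph V) {a b : V} (P : G.Walk a b)
    (i : ℕ) : ℕ :=
  letI := Classical.decPred (inSubtree G P i)
  Finset.univ.sup fun u => if inSubtree G P i u then G.dist (P.getVert i) u else 0

/-!
Every vertex `x` of the tree hangs off the path `P = v₀ ⋯ v_d` at some index `j`, at height
`h = d(v_j, x)`, and `d(v_k, x) = h + |k - j|`: along `P` the distance to `x` changes by one at
each step and has no strict local maximum, because a vertex has only one neighbour closer to `x`.
As `P` is diametrical, `h ≤ min j (d - j)`. The Fermat distance of `v_i, x, y` is at least half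
the perimeter of the triple and at most the cost of the point `v_m`, where `m` is the median of
`i` and the indices at which `x` and `y` hang off `P`. Comparing the two bounds gives `ε₃(v_i) = max d (max i (d - i) + H)` with `H`
the largest height, which is invariant under `i ↦ d - i`.
-/

theorem eq_add_sub_of_forall_le_of_no_peak {f : ℕ → ℕ} {n j : ℕ}
    (step : ∀ k < n, f (k + 1) = f k + 1 ∨ f k = f (k + 1) + 1)
    (no_peak : ∀ k, k + 2 ≤ n → f k < f (k + 1) → f (k + 2) < f (k + 1) → False)
    (hmin : ∀ k ≤ n, f j ≤ f k) {k : ℕ} (hjk : j ≤ k) (hkn : k ≤ n) :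
    f k = f j + (k - j) := by
  have rise : ∀ k, j ≤ k → k < n → f (k + 1) = f k + 1 := by
    intro k hjk
    induction k, hjk using Nat.le_induction with
    | base =>
      intro hj
      have := hmin (j + 1) hj
      rcases step j hj with h | h <;> omega
    | succ k hjk ih =>
      intro hk
      have := ih (by omega)
      rcases step (k + 1) hk with h | h
      · exact h
      · have h : f (k + 2) + 1 = f (k + 1) := h.symm
        exact (no_peak k (by omega) (by omega) (by omega)).elim
  induction k, hjk using Nat.le_induction with
  | base => simp
  | succ k hjk ih => rw [rise k hjk hkn, ih (by omega)]; omega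

theorem eq_add_dist_of_forall_le_of_no_peak {f : ℕ → ℕ} {n j : ℕ}
    (step : ∀ k < n, f (k + 1) = f k + 1 ∨ f k = f (k + 1) + 1)
    (no_peak : ∀ k, k + 2 ≤ n → f k < f (k + 1) → f (k + 2) < f (k + 1) → False)
    (hj : j ≤ n) (hmin : ∀ k ≤ n, f j ≤ f k) {k : ℕ} (hkn : k ≤ n) :
    f k = f j + (k - j) + (j - k) := by
  rcases le_total j k with hjk | hkj
  · rw [eq_add_sub_of_forall_le_of_no_peak step no_peak hmin hjk hkn]; omega
  · -- the one-sided statement for the reflected sequence `k ↦ f (n - k)`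
    have key := eq_add_sub_of_forall_le_of_no_peak (f := fun k => f (n - k)) (n := n)
      (j := n - j) (k := n - k) ?_ ?_ ?_ (by omega) (by omega)
    · simp only [Nat.sub_sub_self hj, Nat.sub_sub_self hkn] at key
      omega
    · intro k hk
      have e : n - k = n - (k + 1) + 1 := by omega
      rw [e]; rcases step (n - (k + 1)) (by omega) with h | h <;> omega
    · intro k hk h1 h2
      have e1 : n - k = n - (k + 2) + 2 := by omega
      have e2 : n - (k + 1) = n - (k + 2) + 1 := by omega
      rw [e1, e2] at h1
      rw [e2] at h2
      exact no_peak (n - (k + 2)) (by omega) h2 h1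
    · intro k hk
      simpa only [Nat.sub_sub_self hj] using hmin (n - k) (by omega)

namespace SimpleGraph.IsTree

variable {G : SimpleGraph V} (hG : G.IsTree)
include hG

theorem length_eq_dist_of_isPath {u v : V} {p : G.Walk u v} (hp : p.IsPath) :
    p.length = G.dist u v := by
  obtain ⟨q, hq, hqlen⟩ := hG.connected.exists_path_of_dist u v
  rw [← hqlen, (hG.existsUnique_path u v).unique hp hq]

theorem eq_of_adj_of_dist_lt (x : V) {a b w : V} (ha : G.Adj a w) (hb : G.Adj b w)
    (hxa : G.dist x a < G.dist x w) (hxb : G.dist x b < G.dist x w) : a = b := by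
  obtain ⟨q, hq, hqlen⟩ := hG.connected.exists_path_of_dist x w
  -- a neighbour `c` of `w` off `q` would give the path `q.concat _` to `c`, longer than `d(x, c)`
  have mem : ∀ c, G.Adj c w → G.dist x c < G.dist x w → c ∈ q.support := by
    intro c hc hxc
    by_contra hnot
    have := hG.length_eq_dist_of_isPath (hq.concat hnot hc.symm)
    rw [Walk.length_concat] at this
    omega
  rw [hG.isAcyclic.eq_penultimate_of_adj_end hq ha.symm (mem a ha hxa),
    hG.isAcyclic.eq_penultimate_of_adj_end hq hb.symm (mem b hb hxb)]

variable {u v : V} {P : G.Walk u v}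

theorem exists_dist_getVert_eq (hP : P.IsPath) (x : V) :
    ∃ j ≤ P.length, ∀ k ≤ P.length,
      G.dist x (P.getVert k) = G.dist x (P.getVert j) + (k - j) + (j - k) := by
  obtain ⟨j, hj, hmin⟩ := (Finset.range (P.length + 1)).exists_min_image
    (fun k => G.dist x (P.getVert k)) Finset.nonempty_range_add_one
  simp only [Finset.mem_range, Nat.lt_succ_iff] at hj hmin
  refine ⟨j, hj, fun k hk =>
    eq_add_dist_of_forall_le_of_no_peak (f := fun k => G.dist x (P.getVert k)) ?_ ?_ hj hmin hk⟩
  · intro k hk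
    exact (hG.dist_eq_dist_add_one_of_adj x (P.adj_getVert_succ hk)).symm
  · intro k hk h1 h2
    have hsame := hG.eq_of_adj_of_dist_lt x (P.adj_getVert_succ (by omega))
      (P.adj_getVert_succ (i := k + 1) (by omega)).symm h1 h2
    have := hP.getVert_injOn (by simp only [Set.mem_ofPred_eq]; omega)
      (by simp only [Set.mem_ofPred_eq]; omega) hsame
    omega

theorem dist_getVert_getVert (hP : P.IsPath) {m k : ℕ} (hm : m ≤ P.length)
    (hk : k ≤ P.length) : G.dist (P.getVert m) (P.getVert k) = (k - m) + (m - k) := by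
  obtain ⟨j, hj, hdist⟩ := hG.exists_dist_getVert_eq hP (P.getVert m)
  have := hdist m hm
  rw [dist_self] at this
  rw [hdist k hk]
  omega

theorem exists_inSubtree (hP : P.IsPath) (x : V) : ∃ j ≤ P.length, inSubtree G P j x := by
  obtain ⟨j, hj, hdist⟩ := hG.exists_dist_getVert_eq hP x
  refine ⟨j, hj, fun k hk => ?_⟩
  rw [hdist k hk, hG.dist_getVert_getVert hP hj hk]
  omega

end SimpleGraph.IsTree

section Fermat

variable {G : SimpleGraph V}

theorem fermatDist_le (σ u v w : V) :
    fermatDist G u v w ≤ G.dist σ u + G.dist σ v + G.dist σ w :=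
  ciInf_le (OrderBot.bddBelow _) σ

theorem fermatDist_comm (u v w : V) : fermatDist G u v w = fermatDist G u w v := by
  simp only [fermatDist, add_right_comm]

theorem SimpleGraph.Connected.dist_add_dist_add_dist_le_two_mul_fermatDist (hG : G.Connected)
    (u v w : V) : G.dist u v + G.dist u w + G.dist v w ≤ 2 * fermatDist G u v w := by
  have : Nonempty V := ⟨u⟩
  obtain ⟨σ, hσ⟩ : ∃ σ, G.dist σ u + G.dist σ v + G.dist σ w = fermatDist G u v w :=
    ciInf_mem _
  have huv : G.dist u v ≤ G.dist u σ + G.dist σ v := hG.dist_triangle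
  have huw : G.dist u w ≤ G.dist u σ + G.dist σ w := hG.dist_triangle
  have hvw : G.dist v w ≤ G.dist v σ + G.dist σ w := hG.dist_triangle
  have hσu : G.dist u σ = G.dist σ u := dist_comm
  have hσv : G.dist v σ = G.dist σ v := dist_comm
  omega

variable [Fintype V]

theorem fermatDist_le_fermatEcc (u v w : V) : fermatDist G u v w ≤ fermatEcc G u :=
  Finset.le_sup (f := fun p : V × V => fermatDist G u p.1 p.2) (Finset.mem_univ (v, w))

theorem fermatEcc_le {u : V} {m : ℕ} (h : ∀ v w, fermatDist G u v w ≤ m) :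
    fermatEcc G u ≤ m :=
  Finset.sup_le fun p _ => h p.1 p.2

theorem dist_le_gdiam (u v : V) : G.dist u v ≤ gdiam G :=
  Finset.le_sup (f := fun p : V × V => G.dist p.1 p.2) (Finset.mem_univ (u, v))

end Fermat

section DiametricalPath

variable {T : SimpleGraph V} (hT : T.IsTree) {a b : V} {P : T.Walk a b} (hP : P.IsPath)
include hT hP

theorem inSubtree.dist_getVert {j : ℕ} {x : V} (hx : inSubtree T P j x) (hj : j ≤ P.length)
    {k : ℕ} (hk : k ≤ P.length) :
    T.dist (P.getVert k) x = T.dist (P.getVert j) x + (k - j) + (j - k) := by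
  rw [dist_comm, hx k hk, dist_comm, hT.dist_getVert_getVert hP hj hk]
  omega

theorem inSubtree.dist_add_max_le (hdiam : ∀ u v, T.dist u v ≤ P.length) {j : ℕ} {x : V}
    (hx : inSubtree T P j x) (hj : j ≤ P.length) :
    T.dist (P.getVert j) x + max j (P.length - j) ≤ P.length := by
  have := hx.dist_getVert hT hP hj (Nat.zero_le _)
  have := hx.dist_getVert hT hP hj le_rfl
  have := hdiam (P.getVert 0) x
  have := hdiam (P.getVert P.length) x
  omega

theorem fermatDist_getVert_le_add {i j k m : ℕ} {x y : V} (hx : inSubtree T P j x)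
    (hy : inSubtree T P k y) (hi : i ≤ P.length) (hj : j ≤ P.length) (hk : k ≤ P.length)
    (hm : m ≤ P.length) :
    fermatDist T (P.getVert i) x y ≤ (i - m) + (m - i) +
      (T.dist (P.getVert j) x + (m - j) + (j - m)) +
      (T.dist (P.getVert k) y + (m - k) + (k - m)) := by
  rw [← hT.dist_getVert_getVert hP hm hi, ← hx.dist_getVert hT hP hj hm,
    ← hy.dist_getVert hT hP hk hm]
  exact fermatDist_le _ _ _ _

theorem fermatDist_getVert_le (hdiam : ∀ u v, T.dist u v ≤ P.length) {i j k : ℕ} {x y : V}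
    (hx : inSubtree T P j x) (hy : inSubtree T P k y) (hi : i ≤ P.length)
    (hj : j ≤ P.length) (hk : k ≤ P.length) :
    fermatDist T (P.getVert i) x y ≤ max P.length
      (max i (P.length - i) + max (T.dist (P.getVert j) x) (T.dist (P.getVert k) y)) := by
  wlog hjk : j ≤ k generalizing j k x y
  · rw [fermatDist_comm, max_comm (T.dist (P.getVert j) x)]
    exact this hy hx hk hj (by omega)
  have := hx.dist_add_max_le hT hP hdiam hj
  have := hy.dist_add_max_le hT hP hdiam hk
  -- the Fermat point is `P.getVert m` for the median `m` of `i`, `j`, `k`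
  rcases le_total i j with hij | hji
  · have := fermatDist_getVert_le_add hT hP hx hy hi hj hk hj
    omega
  rcases le_total i k with hik | hki
  · have := fermatDist_getVert_le_add hT hP hx hy hi hj hk hi
    omega
  · have := fermatDist_getVert_le_add hT hP hx hy hi hj hk hk
    omega

variable [Fintype V]

theorem length_le_fermatEcc_getVert {i : ℕ} (hi : i ≤ P.length) :
    P.length ≤ fermatEcc T (P.getVert i) := by
  have h := hT.connected.dist_add_dist_add_dist_le_two_mul_fermatDist
    (P.getVert i) (P.getVert 0) (P.getVert P.length)
  rw [hT.dist_getVert_getVert hP hi (Nat.zero_le _), hT.dist_getVert_getVert hP hi le_rfl,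
    hT.dist_getVert_getVert hP (Nat.zero_le _) le_rfl] at h
  have := fermatDist_le_fermatEcc (G := T) (P.getVert i) (P.getVert 0) (P.getVert P.length)
  omega

theorem max_add_dist_le_fermatEcc_getVert {i j : ℕ} {x : V} (hx : inSubtree T P j x)
    (hj : j ≤ P.length) (hi : i ≤ P.length) :
    max i (P.length - i) + T.dist (P.getVert j) x ≤ fermatEcc T (P.getVert i) := by
  have h0 := hT.connected.dist_add_dist_add_dist_le_two_mul_fermatDist
    (P.getVert i) (P.getVert 0) x
  have hd := hT.connected.dist_add_dist_add_dist_le_two_mul_fermatDist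
    (P.getVert i) (P.getVert P.length) x
  rw [hT.dist_getVert_getVert hP hi (Nat.zero_le _), hx.dist_getVert hT hP hj hi,
    hx.dist_getVert hT hP hj (Nat.zero_le _)] at h0
  rw [hT.dist_getVert_getVert hP hi le_rfl, hx.dist_getVert hT hP hj hi,
    hx.dist_getVert hT hP hj le_rfl] at hd
  have := fermatDist_le_fermatEcc (G := T) (P.getVert i) (P.getVert 0) x
  have := fermatDist_le_fermatEcc (G := T) (P.getVert i) (P.getVert P.length) x
  omega

theorem fermatEcc_getVert_le_fermatEcc_getVert_sub (hdiam : ∀ u v, T.dist u v ≤ P.length)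
    {i : ℕ} (hi : i ≤ P.length) :
    fermatEcc T (P.getVert i) ≤ fermatEcc T (P.getVert (P.length - i)) := by
  refine fermatEcc_le fun x y => ?_
  obtain ⟨j, hj, hx⟩ := hT.exists_inSubtree hP x
  obtain ⟨k, hk, hy⟩ := hT.exists_inSubtree hP y
  have hi' : P.length - i ≤ P.length := Nat.sub_le _ _
  have := fermatDist_getVert_le hT hP hdiam hx hy hi hj hk
  have := max_add_dist_le_fermatEcc_getVert hT hP hx hj hi'
  have := max_add_dist_le_fermatEcc_getVert hT hP hy hk hi'
  have := length_le_fermatEcc_getVert hT hP hi'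
  omega

end DiametricalPath

theorem fermatEcc_symmetric_on_diametrical_path_general [Fintype V] (T : SimpleGraph V) (hT : T.IsTree)
    {v₀ vd : V} (P : T.Walk v₀ vd) (hP : P.IsPath) (d : ℕ) (hlen : P.length = d)
    (hdiam : d = gdiam T)
    (i : ℕ) (hi : i ≤ d) :
    fermatEcc T (P.getVert i) = fermatEcc T (P.getVert (d - i)) := by
  subst hlen
  have hdist : ∀ u v, T.dist u v ≤ P.length := fun u v => hdiam ▸ dist_le_gdiam u v
  have hsymm := fermatEcc_getVert_le_fermatEcc_getVert_sub hT hP hdist (i := P.length - i)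
  rw [Nat.sub_sub_self hi] at hsymm
  exact le_antisymm (fermatEcc_getVert_le_fermatEcc_getVert_sub hT hP hdist hi)
    (hsymm (Nat.sub_le _ _))

/-- Along a diametrical path `v₀v₁⋯v_d` of a finite tree containing all central
vertices, the Fermat eccentricity is symmetric: `ε₃(vᵢ) = ε₃(v_{d-i})` for all `0 ≤ i ≤ d`. -/
theorem fermatEcc_symmetric_on_diametrical_path [Fintype V] (T : SimpleGraph V) (hT : T.IsTree)
    {v₀ vd : V} (P : T.Walk v₀ vd) (hP : P.IsPath) (d : ℕ) (hlen : P.length = d)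
    (hdiam : d = gdiam T)
    (hcentral : ∀ c : V, isCentral T c → ∃ i ≤ d, P.getVert i = c)
    (i : ℕ) (hi : i ≤ d) :
    fermatEcc T (P.getVert i) = fermatEcc T (P.getVert (d - i)) :=
  fermatEcc_symmetric_on_diametrical_path_general T hT P hP d hlen hdiam i hi
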